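/- Leakage of the binary Laplace mechanism: let b > 0 and let f_L(t) = (1/(2b))·exp(−|t|/b) be the density of the zero-mean Laplace distribution with scale b. Let p ∈ (0,1) with p_min = min(p, 1−p), and define for y ∈ ℝ the mixture density f_Y(y) = p·f_L(y+1) + (1−p)·f_L(y−1), which is the density of Y = X + L where X ∈ {−1, 1} has P(X = −1) = p. Then sup over y ∈ ℝ of log( max_{x∈{−1,1}} f_L(y−x) / f_Y(y) ) = 2/b − log( e^{2/b}·p_min + 1 − p_min ). -/

import Mathlib

open Real

noncomputable def lapDens (b t : ℝ) : ℝ := (1 / (2 * b)) * Real.exp (-|t| / b)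

lemma lapDens_pos {b : ℝ} (hb : 0 < b) (t : ℝ) : 0 < lapDens b t := by
  unfold lapDens; positivity

lemma lapDens_le {b : ℝ} (hb : 0 < b) {s t : ℝ} (h : |s| ≤ |t| + 2) :
    lapDens b t ≤ Real.exp (2 / b) * lapDens b s := by
  unfold lapDens
  rw [mul_left_comm, ← Real.exp_add]
  have h2 : -|t| / b ≤ 2 / b + -|s| / b := by
    rw [← add_div]
    gcongr
    linarith
  have h3 : (0:ℝ) < 1 / (2 * b) := by positivity
  nlinarith [Real.exp_le_exp.2 h2, Real.exp_pos (-|t| / b)]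

lemma aux_div {b X E D : ℝ} (hb : 0 < b) (hX : 0 < X) (hE : 0 < E)
    (hDX : D = E * X) : (1 / (2 * b)) / ((1 / (2 * b)) * X) = E / D := by
  rw [hDX]
  have hu : (0:ℝ) < 1 / (2 * b) := by positivity
  field_simp

/-- Leakage of the binary Laplace mechanism: for `X ∈ {−1, 1}` with `P(X = −1) = p` and
`Y = X + L` with `L` Laplace of scale `b`, the worst-case pointwise maximal leakage is
`2/b − log(e^{2/b}·p_min + 1 − p_min)` where `p_min = min(p, 1 − p)`. -/
theorem stmt16 (b : ℝ) (hb : 0 < b) (p : ℝ) (hp0 : 0 < p) (hp1 : p < 1) :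
    (⨆ y : ℝ, Real.log (max (lapDens b (y + 1)) (lapDens b (y - 1)) /
        (p * lapDens b (y + 1) + (1 - p) * lapDens b (y - 1)))) =
      2 / b - Real.log (Real.exp (2 / b) * min p (1 - p) + 1 - min p (1 - p)) := by
  set c := 2 / b with hc
  set q := min p (1 - p) with hqdef
  set E := Real.exp c with hE
  have hcpos : 0 < c := by positivity
  have hEone : 1 ≤ E := by
    rw [hE]; exact Real.one_le_exp hcpos.le
  have hEpos : 0 < E := lt_of_lt_of_le one_pos hEone
  have hq0 : 0 < q := lt_min hp0 (by linarith)
  have hqp : q ≤ p := min_le_left _ _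
  have hq1 : q ≤ 1 - p := min_le_right _ _
  set D := E * q + 1 - q with hD
  clear_value D
  clear_value E
  clear_value q
  clear_value c
  have hDpos : 0 < D := by nlinarith
  have hlogM : Real.log (E / D) = c - Real.log D := by
    rw [Real.log_div (ne_of_gt hEpos) (ne_of_gt hDpos), hE, Real.log_exp]
  -- upper bound for every y
  have key : ∀ y : ℝ, Real.log (max (lapDens b (y + 1)) (lapDens b (y - 1)) /
      (p * lapDens b (y + 1) + (1 - p) * lapDens b (y - 1))) ≤ c - Real.log D := by
    intro y
    set A := lapDens b (y + 1) with hA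
    set B := lapDens b (y - 1) with hB
    have hApos : 0 < A := lapDens_pos hb _
    have hBpos : 0 < B := lapDens_pos hb _
    have hAB : A ≤ E * B := by
      rw [hA, hB, hE, hc]
      exact lapDens_le hb (by
        have := abs_sub_abs_le_abs_sub (y - 1) (y + 1)
        have h2 : |(y - 1) - (y + 1)| = 2 := by
          rw [show (y - 1) - (y + 1) = -2 by ring]; norm_num
        linarith)
    have hBA : B ≤ E * A := by
      rw [hA, hB, hE, hc]
      exact lapDens_le hb (by
        have := abs_sub_abs_le_abs_sub (y + 1) (y - 1)
        have h2 : |(y + 1) - (y - 1)| = 2 := by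
          rw [show (y + 1) - (y - 1) = 2 by ring]; norm_num
        linarith)
    have hmix : 0 < p * A + (1 - p) * B := by nlinarith
    have hratio : max A B / (p * A + (1 - p) * B) ≤ E / D := by
      rw [div_le_div_iff₀ hmix hDpos]
      rcases max_cases A B with ⟨hm, hba⟩ | ⟨hm, hab⟩ <;> rw [hm]
      · have h1 : 0 ≤ (E - 1) * (p - q) * A := by
          apply mul_nonneg (mul_nonneg (by linarith) (by linarith)) hApos.le
        have h2 : 0 ≤ (1 - p) * (E * B - A) := by
          apply mul_nonneg (by linarith) (by linarith)
        nlinarith [h1, h2]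
      · have h1 : 0 ≤ (E - 1) * ((1 - p) - q) * B := by
          apply mul_nonneg (mul_nonneg (by linarith) (by linarith)) hBpos.le
        have h2 : 0 ≤ p * (E * A - B) := by
          apply mul_nonneg hp0.le (by linarith)
        nlinarith [h1, h2]
    calc Real.log (max A B / (p * A + (1 - p) * B)) ≤ Real.log (E / D) :=
          Real.log_le_log (by positivity) hratio
      _ = c - Real.log D := hlogM
  have hbdd : BddAbove (Set.range fun y : ℝ => Real.log (max (lapDens b (y + 1)) (lapDens b (y - 1)) /
      (p * lapDens b (y + 1) + (1 - p) * lapDens b (y - 1)))) := by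
    refine ⟨c - Real.log D, ?_⟩
    rintro _ ⟨y, rfl⟩
    exact key y
  -- equality at witness
  have hd0 : lapDens b 0 = 1 / (2 * b) := by
    simp [lapDens]
  have hd2 : lapDens b 2 = 1 / (2 * b) * Real.exp (-c) := by
    rw [lapDens]
    norm_num [hc, neg_div]
  have hdm2 : lapDens b (-2) = 1 / (2 * b) * Real.exp (-c) := by
    rw [lapDens]
    norm_num [hc, neg_div]
  have hexple : Real.exp (-c) ≤ 1 := Real.exp_le_one_iff.2 (by linarith)
  have hEinv : E * Real.exp (-c) = 1 := by
    rw [hE, ← Real.exp_add]; simp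
  apply le_antisymm
  · exact ciSup_le key
  · rcases le_or_gt p (1 - p) with hcase | hcase
    · -- q = p, witness y = -1
      have hq : q = p := hqdef.trans (min_eq_left hcase)
      have hval : Real.log (max (lapDens b ((-1:ℝ) + 1)) (lapDens b ((-1:ℝ) - 1)) /
          (p * lapDens b ((-1:ℝ) + 1) + (1 - p) * lapDens b ((-1:ℝ) - 1))) = c - Real.log D := by
        have e1 : ((-1:ℝ) + 1) = 0 := by norm_num
        have e2 : ((-1:ℝ) - 1) = -2 := by norm_num
        rw [e1, e2, hd0, hdm2]
        have hmax : max (1 / (2 * b)) (1 / (2 * b) * Real.exp (-c)) = 1 / (2 * b) := by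
          apply max_eq_left
          have h2b : (0:ℝ) ≤ 1 / (2 * b) := by positivity
          nlinarith [mul_le_mul_of_nonneg_left hexple h2b]
        rw [hmax]
        have hXpos : 0 < p + (1 - p) * Real.exp (-c) := by nlinarith [Real.exp_pos (-c)]
        have hDX : D = E * (p + (1 - p) * Real.exp (-c)) := by
          rw [hD, hq]
          have : E * ((1 - p) * Real.exp (-c)) = 1 - p := by
            rw [show E * ((1 - p) * Real.exp (-c)) = (1 - p) * (E * Real.exp (-c)) by ring,
              hEinv, mul_one]
          linear_combination -this
        have hden : p * (1 / (2 * b)) + (1 - p) * (1 / (2 * b) * Real.exp (-c))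
            = (1 / (2 * b)) * (p + (1 - p) * Real.exp (-c)) := by ring
        rw [hden, aux_div hb hXpos hEpos hDX, hlogM]
      calc c - Real.log D = _ := hval.symm
        _ ≤ _ := le_ciSup hbdd (-1 : ℝ)
    · -- q = 1 - p, witness y = 1
      have hq : q = 1 - p := hqdef.trans (min_eq_right hcase.le)
      have hval : Real.log (max (lapDens b ((1:ℝ) + 1)) (lapDens b ((1:ℝ) - 1)) /
          (p * lapDens b ((1:ℝ) + 1) + (1 - p) * lapDens b ((1:ℝ) - 1))) = c - Real.log D := by
        have e1 : ((1:ℝ) + 1) = 2 := by norm_num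
        have e2 : ((1:ℝ) - 1) = 0 := by norm_num
        rw [e1, e2, hd0, hd2]
        have hmax : max (1 / (2 * b) * Real.exp (-c)) (1 / (2 * b)) = 1 / (2 * b) := by
          apply max_eq_right
          have h2b : (0:ℝ) ≤ 1 / (2 * b) := by positivity
          nlinarith [mul_le_mul_of_nonneg_left hexple h2b]
        rw [hmax]
        have hXpos : 0 < p * Real.exp (-c) + (1 - p) := by nlinarith [Real.exp_pos (-c)]
        have hDX : D = E * (p * Real.exp (-c) + (1 - p)) := by
          rw [hD, hq]
          have : E * (p * Real.exp (-c)) = p := by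
            rw [show E * (p * Real.exp (-c)) = p * (E * Real.exp (-c)) by ring, hEinv, mul_one]
          linear_combination -this
        have hden : p * (1 / (2 * b) * Real.exp (-c)) + (1 - p) * (1 / (2 * b))
            = (1 / (2 * b)) * (p * Real.exp (-c) + (1 - p)) := by ring
        rw [hden, aux_div hb hXpos hEpos hDX, hlogM]
      calc c - Real.log D = _ := hval.symm
        _ ≤ _ := le_ciSup hbdd (1 : ℝ)
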